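/- First-order optimality at a grid intersection: suppose w₀ ∈ ℝ is such that (w₀, β(w₀)) ∈ C^u_i ∩ C^d_j for some 1 ≤ i ≤ N_u and 1 ≤ j ≤ N_d. Then (p/q)·f'⁺(x^u_i) ≤ ((1 − p)/(1 − q))·g'⁻(x^d_j) and ((1 − p)/(1 − q))·g'⁺(x^d_j) ≤ (p/q)·f'⁻(x^u_i), where q = (R − d)/(u − d), and at least one of these two inequalities is strict. -/

import Mathlib

/-- `f` is affine on the set `s`. -/
def AffOn (f : ℝ → ℝ) (s : Set ℝ) : Prop := ∃ a c : ℝ, ∀ y ∈ s, f y = a * y + c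

/-- Left derivative of `f` at `x`. -/
noncomputable def lDeriv (f : ℝ → ℝ) (x : ℝ) : ℝ := derivWithin f (Set.Iio x) x

/-- Right derivative of `f` at `x`. -/
noncomputable def rDeriv (f : ℝ → ℝ) (x : ℝ) : ℝ := derivWithin f (Set.Ioi x) x

/-- `f` is piecewise affine with partition points `x 1 < x 2 < … < x N`
(no partition points if `N = 0`, in which case `f` is affine on all of `ℝ`). -/
def PWAff (f : ℝ → ℝ) (N : ℕ) (x : ℕ → ℝ) : Prop :=
  (∀ i, 1 ≤ i → i + 1 ≤ N → x i < x (i + 1)) ∧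
  (N = 0 → AffOn f Set.univ) ∧
  (1 ≤ N → AffOn f (Set.Iic (x 1)) ∧ AffOn f (Set.Ici (x N)) ∧
    ∀ i, 1 ≤ i → i + 1 ≤ N → AffOn f (Set.Icc (x i) (x (i + 1))))

/-- `f` belongs to class `H` as witnessed by the points `x 1 < … < x N`:
piecewise linear, concave on `ℝ`, and eventually constant. -/
def ClassHAux (f : ℝ → ℝ) (N : ℕ) (x : ℕ → ℝ) : Prop :=
  PWAff f N x ∧ ConcaveOn ℝ Set.univ f ∧ ∃ xb : ℝ, ∀ y, xb ≤ y → f y = f xb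

/-- `f` belongs to class `H`. -/
def ClassH (f : ℝ → ℝ) : Prop := ∃ N x, ClassHAux f N x

/-- `x 1 < … < x N` are the singular values of the class-`H` function `f`:
they partition `ℝ` into pieces on which `f` is affine and each of them is a genuine
kink, i.e. the right derivative is strictly smaller than the left derivative there. -/
def HasSingVals (f : ℝ → ℝ) (N : ℕ) (x : ℕ → ℝ) : Prop :=
  ClassHAux f N x ∧ ∀ i, 1 ≤ i → i ≤ N → rDeriv f (x i) < lDeriv f (x i)

/-- The dynamic-programming objective
`H(w,b) = R⁻¹ (p f(wR + b(u−R)) + (1−p) g(wR + b(d−R)))`. -/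
noncomputable def Hfun (R u d p : ℝ) (f g : ℝ → ℝ) (w b : ℝ) : ℝ :=
  R⁻¹ * (p * f (w * R + b * (u - R)) + (1 - p) * g (w * R + b * (d - R)))

/-- The value function `V(w) = sup_b H(w,b)`. -/
noncomputable def Vfun (R u d p : ℝ) (f g : ℝ → ℝ) (w : ℝ) : ℝ :=
  ⨆ b : ℝ, Hfun R u d p f g w b

/-- The set of maximizers `B(w) = {b : H(w,b) = V(w)}`. -/
noncomputable def Bset (R u d p : ℝ) (f g : ℝ → ℝ) (w : ℝ) : Set ℝ :=
  {b : ℝ | Hfun R u d p f g w b = Vfun R u d p f g w}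

/-- The minimal optimal strategy `β(w) = min B(w)`. -/
noncomputable def betaFun (R u d p : ℝ) (f g : ℝ → ℝ) (w : ℝ) : ℝ :=
  sInf (Bset R u d p f g w)

/-- The grid line `C^u = {(w,b) : wR + b(u−R) = c}`. -/
def Cu (R u : ℝ) (c : ℝ) : Set (ℝ × ℝ) := {pt | pt.1 * R + pt.2 * (u - R) = c}

/-- The grid line `C^d = {(w,b) : wR + b(d−R) = c}`. -/
def Cd (R d : ℝ) (c : ℝ) : Set (ℝ × ℝ) := {pt | pt.1 * R + pt.2 * (d - R) = c}

/-- The grid `G`, the union of the lines `C^u_i`, `1 ≤ i ≤ Nu`, and `C^d_j`, `1 ≤ j ≤ Nd`. -/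
def Grid (R u d : ℝ) (Nu : ℕ) (xu : ℕ → ℝ) (Nd : ℕ) (xd : ℕ → ℝ) : Set (ℝ × ℝ) :=
  (⋃ i ∈ Finset.Icc 1 Nu, Cu R u (xu i)) ∪ (⋃ j ∈ Finset.Icc 1 Nd, Cd R d (xd j))

/-- The open parallelogram `D_ij`, for `0 ≤ i ≤ Nu`, `0 ≤ j ≤ Nd`, with the conventions
`x^u_0 = x^d_0 = −∞` and `x^u_{Nu+1} = x^d_{Nd+1} = +∞`. -/
def Dset (R u d : ℝ) (Nu : ℕ) (xu : ℕ → ℝ) (Nd : ℕ) (xd : ℕ → ℝ) (i j : ℕ) : Set (ℝ × ℝ) :=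
  {pt | (1 ≤ i → xu i < pt.1 * R + pt.2 * (u - R)) ∧
        (i < Nu → pt.1 * R + pt.2 * (u - R) < xu (i + 1)) ∧
        (1 ≤ j → xd j < pt.1 * R + pt.2 * (d - R)) ∧
        (j < Nd → pt.1 * R + pt.2 * (d - R) < xd (j + 1))}

/-!
`f` and `g` are concave, eventually constant and non-constant, so they tend to `-∞` at `-∞` and
`b ↦ H(w₀, b)` tends to `-∞` in both directions: its maximizer set is closed, nonempty and bounded
below, and `β(w₀)` is its least element. At the grid point `f` and `g` are affine on either side of
their kinks, so moving `b` by `±δ` changes `H` linearly in `δ`, with slope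
`R⁻¹ (p f'⁺ (u − R) − (1 − p) g'⁻ (R − d))` to the right and
`−R⁻¹ (p f'⁻ (u − R) − (1 − p) g'⁺ (R − d))` to the left. Maximality makes the first `≤ 0`, and
since `β(w₀)` is the *least* maximizer the second is `< 0`. Scaling by
`(u − d) / ((R − d)(u − R)) > 0` gives the two inequalities, the second one strict.
-/

open Set Filter Topology

section ConcaveAsymptotics

variable {f : ℝ → ℝ}

lemma ConcaveOn.le_of_forall_ge_eq (hf : ConcaveOn ℝ univ f) {c : ℝ}
    (hc : ∀ y, c ≤ y → f y = f c) (z : ℝ) : f z ≤ f c := by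
  rcases le_or_gt c z with hz | hz
  · exact (hc z hz).le
  · have hslope := hf.slope_anti_adjacent (mem_univ z) (mem_univ (c + 1)) hz (by linarith)
    rw [hc (c + 1) (by linarith), sub_self, zero_div, le_div_iff₀ (by linarith)] at hslope
    linarith

lemma ConcaveOn.tendsto_atBot_of_lt (hf : ConcaveOn ℝ univ f) {x y : ℝ} (hxy : x < y)
    (hfxy : f x < f y) : Tendsto f atBot atBot := by
  set m := (f y - f x) / (y - x)
  have hm : 0 < m := div_pos (by linarith) (by linarith)
  have hbound : ∀ z < x, f z ≤ f x + m * (z - x) := fun z hz => by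
    have hslope := hf.slope_anti_adjacent (mem_univ z) (mem_univ y) hz hxy
    rw [le_div_iff₀ (by linarith)] at hslope
    linarith
  have hline : Tendsto (fun z => f x + m * (z - x)) atBot atBot :=
    tendsto_atBot_add_const_left _ _ <|
      (tendsto_atBot_add_const_right _ _ tendsto_id).const_mul_atBot hm
  exact tendsto_atBot_mono' _ ((eventually_lt_atBot x).mono hbound) hline

lemma ConcaveOn.tendsto_atBot_of_forall_ge_eq (hf : ConcaveOn ℝ univ f) {c : ℝ}
    (hc : ∀ y, c ≤ y → f y = f c) (hnc : ∃ a b, f a ≠ f b) : Tendsto f atBot atBot := by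
  obtain ⟨z, hz⟩ : ∃ z, f z ≠ f c := by
    obtain ⟨a, b, hab⟩ := hnc
    by_contra! h
    exact hab ((h a).trans (h b).symm)
  have hzc : z < c := lt_of_not_ge fun h => hz (hc z h)
  exact hf.tendsto_atBot_of_lt hzc ((hf.le_of_forall_ge_eq hc z).lt_of_ne hz)

end ConcaveAsymptotics

lemma Continuous.bddAbove_range_of_tendsto_cocompact {φ : ℝ → ℝ} (hφ : Continuous φ)
    (hlim : Tendsto φ (cocompact ℝ) atBot) : BddAbove (range φ) :=
  let ⟨m, hm⟩ := hφ.exists_forall_ge hlim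
  ⟨φ m, forall_mem_range.2 hm⟩

lemma Continuous.isLeast_setOf_eq_iSup {φ : ℝ → ℝ} (hφ : Continuous φ)
    (hlim : Tendsto φ (cocompact ℝ) atBot) :
    IsLeast {b | φ b = ⨆ x, φ x} (sInf {b | φ b = ⨆ x, φ x}) := by
  obtain ⟨m, hm⟩ := hφ.exists_forall_ge hlim
  have hsup : ⨆ x, φ x = φ m :=
    le_antisymm (ciSup_le hm) (le_ciSup (hφ.bddAbove_range_of_tendsto_cocompact hlim) m)
  obtain ⟨b₁, hb₁⟩ := eventually_atBot.mp <|
    (hlim.mono_left (by simp [cocompact_eq_atBot_atTop])).eventually (eventually_lt_atBot (φ m))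
  refine (isClosed_eq hφ continuous_const).isLeast_csInf ⟨m, hsup.symm⟩ ⟨b₁, fun b hb => ?_⟩
  by_contra! hlt
  exact (hb₁ b hlt.le).ne (hb.trans hsup)

section Derivatives

variable {f : ℝ → ℝ} {x a c ε : ℝ}

lemma rDeriv_eq_of_eqOn_Icc (hε : 0 < ε) (h : ∀ y ∈ Icc x (x + ε), f y = a * y + c) :
    rDeriv f x = a := by
  have heq : f =ᶠ[𝓝[>] x] fun y => a * y + c := by
    filter_upwards [Ioo_mem_nhdsGT (by linarith : x < x + ε)] with y hy
    exact h y ⟨hy.1.le, hy.2.le⟩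
  have hderiv : HasDerivWithinAt (fun y => a * y + c) a (Ioi x) x := by
    simpa using ((hasDerivAt_id x).const_mul a |>.add_const c).hasDerivWithinAt
  rw [rDeriv, heq.derivWithin_eq (h x ⟨le_rfl, by linarith⟩),
    hderiv.derivWithin (uniqueDiffWithinAt_Ioi x)]

lemma lDeriv_eq_of_eqOn_Icc (hε : 0 < ε) (h : ∀ y ∈ Icc (x - ε) x, f y = a * y + c) :
    lDeriv f x = a := by
  have heq : f =ᶠ[𝓝[<] x] fun y => a * y + c := by
    filter_upwards [Ioo_mem_nhdsLT (by linarith : x - ε < x)] with y hy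
    exact h y ⟨hy.1.le, hy.2.le⟩
  have hderiv : HasDerivWithinAt (fun y => a * y + c) a (Iio x) x := by
    simpa using ((hasDerivAt_id x).const_mul a |>.add_const c).hasDerivWithinAt
  rw [lDeriv, heq.derivWithin_eq (h x ⟨by linarith, le_rfl⟩),
    hderiv.derivWithin (uniqueDiffWithinAt_Iio x)]

end Derivatives

namespace PWAff

variable {f : ℝ → ℝ} {N : ℕ} {x : ℕ → ℝ} {i : ℕ}

lemma exists_right_expansion (h : PWAff f N x) (hi1 : 1 ≤ i) (hiN : i ≤ N) :
    ∃ ε > 0, ∀ t ∈ Icc 0 ε, f (x i + t) = f (x i) + rDeriv f (x i) * t := by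
  obtain ⟨hmono, -, hpieces⟩ := h
  obtain ⟨-, hlast, hmid⟩ := hpieces (hi1.trans hiN)
  obtain ⟨a, c, ε, hε, hac⟩ : ∃ a c ε, 0 < ε ∧ ∀ y ∈ Icc (x i) (x i + ε), f y = a * y + c := by
    rcases hiN.eq_or_lt with rfl | hlt
    · obtain ⟨a, c, hac⟩ := hlast
      exact ⟨a, c, 1, one_pos, fun y hy => hac y hy.1⟩
    · obtain ⟨a, c, hac⟩ := hmid i hi1 hlt
      exact ⟨a, c, x (i + 1) - x i, by linarith [hmono i hi1 hlt],
        fun y hy => hac y ⟨hy.1, by linarith [hy.2]⟩⟩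
  refine ⟨ε, hε, fun t ht => ?_⟩
  rw [rDeriv_eq_of_eqOn_Icc hε hac, hac _ ⟨le_rfl, by linarith⟩,
    hac _ ⟨by linarith [ht.1], by linarith [ht.2]⟩]
  ring

lemma exists_left_expansion (h : PWAff f N x) (hi1 : 1 ≤ i) (hiN : i ≤ N) :
    ∃ ε > 0, ∀ t ∈ Icc 0 ε, f (x i - t) = f (x i) - lDeriv f (x i) * t := by
  obtain ⟨hmono, -, hpieces⟩ := h
  obtain ⟨hfirst, -, hmid⟩ := hpieces (hi1.trans hiN)
  obtain ⟨a, c, ε, hε, hac⟩ : ∃ a c ε, 0 < ε ∧ ∀ y ∈ Icc (x i - ε) (x i), f y = a * y + c := by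
    rcases hi1.eq_or_lt with rfl | hlt
    · obtain ⟨a, c, hac⟩ := hfirst
      exact ⟨a, c, 1, one_pos, fun y hy => hac y hy.2⟩
    · obtain ⟨k, rfl⟩ : ∃ k, i = k + 1 := ⟨i - 1, by omega⟩
      obtain ⟨a, c, hac⟩ := hmid k (by omega) hiN
      exact ⟨a, c, x (k + 1) - x k, by linarith [hmono k (by omega) hiN],
        fun y hy => hac y ⟨by linarith [hy.1], hy.2⟩⟩
  refine ⟨ε, hε, fun t ht => ?_⟩
  rw [lDeriv_eq_of_eqOn_Icc hε hac, hac _ ⟨by linarith, le_rfl⟩,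
    hac _ ⟨by linarith [ht.2], by linarith [ht.1]⟩]
  ring

end PWAff

section Objective

variable {R u d p : ℝ} {f g : ℝ → ℝ}

lemma continuous_Hfun (hf : Continuous f) (hg : Continuous g) (w : ℝ) :
    Continuous (Hfun R u d p f g w) := by
  unfold Hfun
  fun_prop

lemma tendsto_Hfun_cocompact (hR : 0 < R) (hdR : d < R) (hRu : R < u) (hp0 : 0 < p)
    (hp1 : p < 1) (hf : Tendsto f atBot atBot) (hg : Tendsto g atBot atBot) {Mf Mg : ℝ}
    (hfM : ∀ y, f y ≤ Mf) (hgM : ∀ y, g y ≤ Mg) (w : ℝ) :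
    Tendsto (Hfun R u d p f g w) (cocompact ℝ) atBot := by
  have hup : Tendsto (fun b => w * R + b * (u - R)) atBot atBot :=
    tendsto_atBot_add_const_left _ _ (tendsto_id.atBot_mul_const (by linarith))
  have hdown : Tendsto (fun b => w * R + b * (d - R)) atTop atBot :=
    tendsto_atBot_add_const_left _ _ (tendsto_id.atTop_mul_const_of_neg (by linarith))
  rw [cocompact_eq_atBot_atTop]
  refine .sup (.const_mul_atBot (inv_pos.2 hR) ?_) (.const_mul_atBot (inv_pos.2 hR) ?_)
  · exact tendsto_atBot_add_right_of_ge _ ((1 - p) * Mg) ((hf.comp hup).const_mul_atBot hp0)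
      fun b => mul_le_mul_of_nonneg_left (hgM _) (by linarith)
  · exact tendsto_atBot_add_left_of_ge _ (p * Mf)
      (fun b => mul_le_mul_of_nonneg_left (hfM _) hp0.le)
      ((hg.comp hdown).const_mul_atBot (by linarith))

variable {w b xu xd a c : ℝ}

lemma exists_Hfun_add_eq (hdR : d < R) (hRu : R < u)
    (hfr : ∃ ε > 0, ∀ t ∈ Icc 0 ε, f (xu + t) = f xu + a * t)
    (hgl : ∃ ε > 0, ∀ t ∈ Icc 0 ε, g (xd - t) = g xd - c * t)
    (hxu : w * R + b * (u - R) = xu) (hxd : w * R + b * (d - R) = xd) :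
    ∃ δ > 0, Hfun R u d p f g w (b + δ) =
      Hfun R u d p f g w b + δ * R⁻¹ * (p * a * (u - R) - (1 - p) * c * (R - d)) := by
  obtain ⟨ε₁, hε₁, hf⟩ := hfr
  obtain ⟨ε₂, hε₂, hg⟩ := hgl
  refine ⟨min (ε₁ / (u - R)) (ε₂ / (R - d)), by positivity, ?_⟩
  set δ := min (ε₁ / (u - R)) (ε₂ / (R - d))
  have hδ₁ : δ * (u - R) ≤ ε₁ := (le_div_iff₀ (by linarith)).mp (min_le_left _ _)
  have hδ₂ : δ * (R - d) ≤ ε₂ := (le_div_iff₀ (by linarith)).mp (min_le_right _ _)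
  have hδ : 0 ≤ δ := by positivity
  unfold Hfun
  rw [show w * R + (b + δ) * (u - R) = xu + δ * (u - R) by linear_combination hxu,
    show w * R + (b + δ) * (d - R) = xd - δ * (R - d) by linear_combination hxd, hxu, hxd,
    hf _ ⟨by nlinarith, hδ₁⟩, hg _ ⟨by nlinarith, hδ₂⟩]
  ring

lemma exists_Hfun_sub_eq (hdR : d < R) (hRu : R < u)
    (hfl : ∃ ε > 0, ∀ t ∈ Icc 0 ε, f (xu - t) = f xu - a * t)
    (hgr : ∃ ε > 0, ∀ t ∈ Icc 0 ε, g (xd + t) = g xd + c * t)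
    (hxu : w * R + b * (u - R) = xu) (hxd : w * R + b * (d - R) = xd) :
    ∃ δ > 0, Hfun R u d p f g w (b - δ) =
      Hfun R u d p f g w b - δ * R⁻¹ * (p * a * (u - R) - (1 - p) * c * (R - d)) := by
  obtain ⟨ε₁, hε₁, hf⟩ := hfl
  obtain ⟨ε₂, hε₂, hg⟩ := hgr
  refine ⟨min (ε₁ / (u - R)) (ε₂ / (R - d)), by positivity, ?_⟩
  set δ := min (ε₁ / (u - R)) (ε₂ / (R - d))
  have hδ₁ : δ * (u - R) ≤ ε₁ := (le_div_iff₀ (by linarith)).mp (min_le_left _ _)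
  have hδ₂ : δ * (R - d) ≤ ε₂ := (le_div_iff₀ (by linarith)).mp (min_le_right _ _)
  have hδ : 0 ≤ δ := by positivity
  unfold Hfun
  rw [show w * R + (b - δ) * (u - R) = xu - δ * (u - R) by linear_combination hxu,
    show w * R + (b - δ) * (d - R) = xd + δ * (R - d) by linear_combination hxd, hxu, hxd,
    hf _ ⟨by nlinarith, hδ₁⟩, hg _ ⟨by nlinarith, hδ₂⟩]
  ring

lemma right_optimality (hR : 0 < R) (hdR : d < R) (hRu : R < u)
    (hmax : ∀ b', Hfun R u d p f g w b' ≤ Hfun R u d p f g w b)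
    (hfr : ∃ ε > 0, ∀ t ∈ Icc 0 ε, f (xu + t) = f xu + a * t)
    (hgl : ∃ ε > 0, ∀ t ∈ Icc 0 ε, g (xd - t) = g xd - c * t)
    (hxu : w * R + b * (u - R) = xu) (hxd : w * R + b * (d - R) = xd) :
    p * a * (u - R) ≤ (1 - p) * c * (R - d) := by
  obtain ⟨δ, hδ, hδeq⟩ := exists_Hfun_add_eq hdR hRu hfr hgl hxu hxd
  have hle := hmax (b + δ)
  rw [hδeq] at hle
  nlinarith [mul_pos hδ (inv_pos.2 hR)]

lemma left_optimality (hR : 0 < R) (hdR : d < R) (hRu : R < u)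
    (hleast : ∀ b', Hfun R u d p f g w b ≤ Hfun R u d p f g w b' → b ≤ b')
    (hfl : ∃ ε > 0, ∀ t ∈ Icc 0 ε, f (xu - t) = f xu - a * t)
    (hgr : ∃ ε > 0, ∀ t ∈ Icc 0 ε, g (xd + t) = g xd + c * t)
    (hxu : w * R + b * (u - R) = xu) (hxd : w * R + b * (d - R) = xd) :
    (1 - p) * c * (R - d) < p * a * (u - R) := by
  obtain ⟨δ, hδ, hδeq⟩ := exists_Hfun_sub_eq hdR hRu hfl hgr hxu hxd
  by_contra! hle
  have := hleast (b - δ) (by rw [hδeq]; nlinarith [mul_pos hδ (inv_pos.2 hR)])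
  linarith

end Objective

lemma div_q_mul_eq {R u d : ℝ} (hdR : d < R) (hRu : R < u) (p a : ℝ) :
    p / ((R - d) / (u - d)) * a = (u - d) / ((R - d) * (u - R)) * (p * a * (u - R)) := by
  have : R - d ≠ 0 := by linarith
  have : u - R ≠ 0 := by linarith
  field_simp

lemma div_one_sub_q_mul_eq {R u d : ℝ} (hdR : d < R) (hRu : R < u) (p a : ℝ) :
    (1 - p) / (1 - (R - d) / (u - d)) * a =
      (u - d) / ((R - d) * (u - R)) * ((1 - p) * a * (R - d)) := by
  have : R - d ≠ 0 := by linarith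
  have : u - R ≠ 0 := by linarith
  have : u - d ≠ 0 := by linarith
  rw [one_sub_div this, show u - d - (R - d) = u - R by ring]
  field_simp

theorem stmt_16_general (R u d p : ℝ) (hd : 0 < d) (hdR : d < R) (hRu : R < u)
    (hp0 : 0 < p) (hp1 : p < 1)
    (q : ℝ) (hq : q = (R - d) / (u - d))
    (f g : ℝ → ℝ) (Nu Nd : ℕ) (xu xd : ℕ → ℝ)
    (hf : HasSingVals f Nu xu) (hg : HasSingVals g Nd xd)
    (hfnc : ∃ a b : ℝ, f a ≠ f b) (hgnc : ∃ a b : ℝ, g a ≠ g b)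
    (w₀ : ℝ) (i j : ℕ) (hi1 : 1 ≤ i) (hiN : i ≤ Nu) (hj1 : 1 ≤ j) (hjN : j ≤ Nd)
    (hmem : (w₀, betaFun R u d p f g w₀) ∈ Cu R u (xu i) ∩ Cd R d (xd j)) :
    (p / q * rDeriv f (xu i) ≤ (1 - p) / (1 - q) * lDeriv g (xd j)) ∧
    ((1 - p) / (1 - q) * rDeriv g (xd j) ≤ p / q * lDeriv f (xu i)) ∧
    ((p / q * rDeriv f (xu i) < (1 - p) / (1 - q) * lDeriv g (xd j)) ∨
     ((1 - p) / (1 - q) * rDeriv g (xd j) < p / q * lDeriv f (xu i))) := by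
  obtain ⟨⟨hfPW, hfconc, cf, hfc⟩, -⟩ := hf
  obtain ⟨⟨hgPW, hgconc, cg, hgc⟩, -⟩ := hg
  have hR : 0 < R := hd.trans hdR
  set β := betaFun R u d p f g w₀
  have hHcont : Continuous (Hfun R u d p f g w₀) := continuous_Hfun (continuousOn_univ.mp
    (hfconc.continuousOn isOpen_univ)) (continuousOn_univ.mp (hgconc.continuousOn isOpen_univ)) w₀
  have hHlim : Tendsto (Hfun R u d p f g w₀) (cocompact ℝ) atBot :=
    tendsto_Hfun_cocompact hR hdR hRu hp0 hp1 (hfconc.tendsto_atBot_of_forall_ge_eq hfc hfnc)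
      (hgconc.tendsto_atBot_of_forall_ge_eq hgc hgnc) (hfconc.le_of_forall_ge_eq hfc)
      (hgconc.le_of_forall_ge_eq hgc) w₀
  have hβ : IsLeast (Bset R u d p f g w₀) β := hHcont.isLeast_setOf_eq_iSup hHlim
  have hβmax : ∀ b, Hfun R u d p f g w₀ b ≤ Hfun R u d p f g w₀ β := fun b =>
    (le_ciSup (hHcont.bddAbove_range_of_tendsto_cocompact hHlim) b).trans_eq hβ.1.symm
  have hβleast : ∀ b, Hfun R u d p f g w₀ β ≤ Hfun R u d p f g w₀ b → β ≤ b := fun b hb =>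
    hβ.2 ((le_antisymm (hβmax b) hb).trans hβ.1)
  have hβu : w₀ * R + β * (u - R) = xu i := hmem.1
  have hβd : w₀ * R + β * (d - R) = xd j := hmem.2
  have hright := right_optimality hR hdR hRu hβmax
    (hfPW.exists_right_expansion hi1 hiN) (hgPW.exists_left_expansion hj1 hjN) hβu hβd
  have hleft := left_optimality hR hdR hRu hβleast
    (hfPW.exists_left_expansion hi1 hiN) (hgPW.exists_right_expansion hj1 hjN) hβu hβd
  have hκ : 0 < (u - d) / ((R - d) * (u - R)) :=
    div_pos (by linarith) (mul_pos (by linarith) (by linarith))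
  subst hq
  simp only [div_q_mul_eq hdR hRu, div_one_sub_q_mul_eq hdR hRu]
  exact ⟨by gcongr, by gcongr, Or.inr (by gcongr)⟩

/-- First-order optimality at a grid intersection: if
`(w₀, β(w₀)) ∈ C^u_i ∩ C^d_j` for some `1 ≤ i ≤ Nu`, `1 ≤ j ≤ Nd`, then
`(p/q) f'⁺(x^u_i) ≤ ((1−p)/(1−q)) g'⁻(x^d_j)` and
`((1−p)/(1−q)) g'⁺(x^d_j) ≤ (p/q) f'⁻(x^u_i)`, with at least one inequality strict. -/
theorem stmt_16 (R u d p : ℝ) (hd : 0 < d) (hdR : d < R) (hRu : R < u)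
    (hp0 : 0 < p) (hp1 : p < 1)
    (q : ℝ) (hq : q = (R - d) / (u - d))
    (f g : ℝ → ℝ) (Nu Nd : ℕ) (xu xd : ℕ → ℝ)
    (hf : HasSingVals f Nu xu) (hg : HasSingVals g Nd xd)
    (hNu : 1 ≤ Nu) (hNd : 1 ≤ Nd)
    (hfnc : ∃ a b : ℝ, f a ≠ f b) (hgnc : ∃ a b : ℝ, g a ≠ g b)
    (w₀ : ℝ) (i j : ℕ) (hi1 : 1 ≤ i) (hiN : i ≤ Nu) (hj1 : 1 ≤ j) (hjN : j ≤ Nd)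
    (hmem : (w₀, betaFun R u d p f g w₀) ∈ Cu R u (xu i) ∩ Cd R d (xd j)) :
    (p / q * rDeriv f (xu i) ≤ (1 - p) / (1 - q) * lDeriv g (xd j)) ∧
    ((1 - p) / (1 - q) * rDeriv g (xd j) ≤ p / q * lDeriv f (xu i)) ∧
    ((p / q * rDeriv f (xu i) < (1 - p) / (1 - q) * lDeriv g (xd j)) ∨
     ((1 - p) / (1 - q) * rDeriv g (xd j) < p / q * lDeriv f (xu i))) :=
  stmt_16_general R u d p hd hdR hRu hp0 hp1 q hq f g Nu Nd xu xd hf hg hfnc hgnc w₀ i j hi1 hiN hj1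
    hjN hmem
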